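/- arXiv:2605.05039 — 9 statements merged into one kernel-verified Lean document; each statement's English description precedes it below -/
import Mathlib

section
/- Let e ≥ 2, K a field of characteristic 0 with Gal(K(ζ_e)/K) ≅ (Z/eZ)×, and let d ∈ (Z/eZ)×. Let σ_{-d} be the K-automorphism of K(ζ_e) sending ζ_e to ζ_e^{-d}. If E_{p₁} and E_{p₂} are generalized Jacobi sums for p₁, p₂ ∈ K× with respect to parameters v₁, v₂ (with e·v₁/2, e·v₂/2 ∈ ℤ), then the function E(a,b) := -σ_{-d}(E_{p₁}(a,b))·E_{p₂}(a,b) satisfies all seven axioms of a generalized Jacobi sum for p₁·p₂ with respect to the parameter v₁+v₂. -/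
open Finset

/-- Thaine's generalized Jacobi sum axioms for `p ∈ Kˣ` with parameter `v`, where
`σ c` denotes the Galois automorphism of `K(ζ_e)/K` sending `ζ_e ↦ ζ_e^c`. -/
def IsGenJacobiSum (e : ℕ) {K L : Type*} [Field K] [Field L] [Algebra K L]
    (σ : (ZMod e)ˣ → (L ≃ₐ[K] L)) (p : K) (v : ℤ) (E : ℤ → ℤ → L) : Prop :=
  (∀ a b : ℤ, E (a + e) b = E a b ∧ E a (b + e) = E a b) ∧
  (∀ a b : ℤ, E a b = E b a) ∧
  (∀ a b : ℤ, E a b = (-1 : L) ^ (v * b) * E (-a - b) b) ∧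
  (∀ a : ℤ, ¬ (e : ℤ) ∣ a → E a 0 = -1) ∧
  (∀ a b : ℤ, ¬ (e : ℤ) ∣ a → ¬ (e : ℤ) ∣ b → ¬ (e : ℤ) ∣ (a + b) →
      E a b * E (-a) (-b) = algebraMap K L p) ∧
  (∀ a b c : ℤ, ¬ (e : ℤ) ∣ (a + b) → ¬ (e : ℤ) ∣ (a + c) → ¬ (e : ℤ) ∣ (a + b + c) →
      E a b * E (-a) (-c)
        = (-1 : L) ^ (v * (b + c)) * E (-(a + b + c)) b * E (a + b + c) (-c)) ∧
  (∀ (c : (ZMod e)ˣ) (a b : ℤ),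
      σ c (E a b) = E (((c : ZMod e).val : ℤ) * a) (((c : ZMod e).val : ℤ) * b))

namespace IsGenJacobiSum

variable {e : ℕ} {K L : Type*} [Field K] [Field L] [Algebra K L] {σ : (ZMod e)ˣ → (L ≃ₐ[K] L)}

/-- Axiom (7) survives because `τ` commutes with the Galois action. -/
theorem map_algEquiv {p : K} {v : ℤ} {E : ℤ → ℤ → L} (hE : IsGenJacobiSum e σ p v E)
    (τ : L ≃ₐ[K] L) (hτ : ∀ c, Commute τ (σ c)) :
    IsGenJacobiSum e σ p v (fun a b => τ (E a b)) := by
  obtain ⟨hper, hsymm, hrefl, hzero, hnorm, hcocycle, hgal⟩ := hE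
  refine ⟨fun a b => ?_, fun a b => ?_, fun a b => ?_, fun a ha => ?_, fun a b ha hb hab => ?_,
    fun a b c hab hac habc => ?_, fun c a b => ?_⟩ <;> dsimp only
  · simp only [(hper a b).1, (hper a b).2, and_self]
  · simp only [hsymm a b]
  · simp only [hrefl a b, map_mul, map_zpow₀, map_neg, map_one]
  · simp only [hzero a ha, map_neg, map_one]
  · simp only [← map_mul, hnorm a b ha hb hab, AlgEquiv.commutes]
  · rw [← map_mul, hcocycle a b c hab hac habc, map_mul, map_mul, map_zpow₀, map_neg, map_one]
  · rw [← hgal, ← AlgEquiv.mul_apply, ← (hτ c).eq, AlgEquiv.mul_apply]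

theorem neg_mul {p₁ p₂ : K} {v₁ v₂ : ℤ} {E₁ E₂ : ℤ → ℤ → L}
    (hE₁ : IsGenJacobiSum e σ p₁ v₁ E₁) (hE₂ : IsGenJacobiSum e σ p₂ v₂ E₂) :
    IsGenJacobiSum e σ (p₁ * p₂) (v₁ + v₂) (fun a b => -E₁ a b * E₂ a b) := by
  obtain ⟨hper₁, hsymm₁, hrefl₁, hzero₁, hnorm₁, hcocycle₁, hgal₁⟩ := hE₁
  obtain ⟨hper₂, hsymm₂, hrefl₂, hzero₂, hnorm₂, hcocycle₂, hgal₂⟩ := hE₂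
  have hsign : (-1 : L) ≠ 0 := neg_ne_zero.mpr one_ne_zero
  refine ⟨fun a b => ?_, fun a b => ?_, fun a b => ?_, fun a ha => ?_, fun a b ha hb hab => ?_,
    fun a b c hab hac habc => ?_, fun c a b => ?_⟩ <;> dsimp only
  · simp only [(hper₁ a b).1, (hper₁ a b).2, (hper₂ a b).1, (hper₂ a b).2, and_self]
  · simp only [hsymm₁ a b, hsymm₂ a b]
  · rw [hrefl₁ a b, hrefl₂ a b, add_mul, zpow_add₀ hsign]
    ring
  · simp only [hzero₁ a ha, hzero₂ a ha]
    ring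
  · calc -E₁ a b * E₂ a b * (-E₁ (-a) (-b) * E₂ (-a) (-b))
        = E₁ a b * E₁ (-a) (-b) * (E₂ a b * E₂ (-a) (-b)) := by ring
      _ = algebraMap K L (p₁ * p₂) := by rw [hnorm₁ a b ha hb hab, hnorm₂ a b ha hb hab, map_mul]
  · calc -E₁ a b * E₂ a b * (-E₁ (-a) (-c) * E₂ (-a) (-c))
        = E₁ a b * E₁ (-a) (-c) * (E₂ a b * E₂ (-a) (-c)) := by ring
      _ = _ := by
        rw [hcocycle₁ a b c hab hac habc, hcocycle₂ a b c hab hac habc, add_mul, zpow_add₀ hsign]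
        ring
  · simp only [map_mul, map_neg, hgal₁, hgal₂]

end IsGenJacobiSum

theorem genJacobiSum_dComp_general (e : ℕ)
    {K L : Type*} [Field K] [Field L] [Algebra K L]
    (σ : (ZMod e)ˣ → (L ≃ₐ[K] L))
    (hσmul : ∀ c₁ c₂ : (ZMod e)ˣ, σ (c₁ * c₂) = σ c₁ * σ c₂)
    (d : (ZMod e)ˣ)
    (p₁ p₂ : K)
    (v₁ v₂ : ℤ)
    (E₁ E₂ : ℤ → ℤ → L)
    (hE₁ : IsGenJacobiSum e σ p₁ v₁ E₁) (hE₂ : IsGenJacobiSum e σ p₂ v₂ E₂) :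
    IsGenJacobiSum e σ (p₁ * p₂) (v₁ + v₂)
      (fun a b => -(σ (-d) (E₁ a b)) * E₂ a b) := by
  have hcomm : ∀ c, Commute (σ (-d)) (σ c) := fun c => by
    rw [Commute, SemiconjBy, ← hσmul, ← hσmul, mul_comm]
  exact (hE₁.map_algEquiv (σ (-d)) hcomm).neg_mul hE₂

/-- The `d`-composition `-σ_{-d}(E_{p₁}(a,b))·E_{p₂}(a,b)` of two generalized Jacobi sums is a
generalized Jacobi sum for `p₁p₂` with parameter `v₁ + v₂` (Theorem 1.1(1)). -/
theorem genJacobiSum_dComp (e : ℕ) [NeZero e] (he : 2 ≤ e)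
    {K L : Type*} [Field K] [CharZero K] [Field L] [Algebra K L]
    (ζ : L) (hζ : IsPrimitiveRoot ζ e)
    (σ : (ZMod e)ˣ → (L ≃ₐ[K] L))
    (hσζ : ∀ c : (ZMod e)ˣ, σ c ζ = ζ ^ (c : ZMod e).val)
    (hσmul : ∀ c₁ c₂ : (ZMod e)ˣ, σ (c₁ * c₂) = σ c₁ * σ c₂)
    (d : (ZMod e)ˣ)
    (p₁ p₂ : K) (hp₁ : p₁ ≠ 0) (hp₂ : p₂ ≠ 0)
    (v₁ v₂ : ℤ) (hv₁ : Even ((e : ℤ) * v₁)) (hv₂ : Even ((e : ℤ) * v₂))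
    (E₁ E₂ : ℤ → ℤ → L)
    (hE₁ : IsGenJacobiSum e σ p₁ v₁ E₁) (hE₂ : IsGenJacobiSum e σ p₂ v₂ E₂) :
    IsGenJacobiSum e σ (p₁ * p₂) (v₁ + v₂)
      (fun a b => -(σ (-d) (E₁ a b)) * E₂ a b) :=
  genJacobiSum_dComp_general e σ hσmul d p₁ p₂ v₁ v₂ E₁ E₂ hE₁ hE₂
end

section
/- Let l be an odd prime and K a field with char K ≠ 2, l and Gal(K(ζ_l)/K) ≅ (Z/lZ)×. Suppose α = Σ_{k=0}^{l-1} a_k ζ_l^k with a_k ∈ K satisfies α·σ_{-1}(α) = p for some p ∈ K×, where σ_{-1}(ζ_l) = ζ_l^{-1}. If a_0 = 0, then: (1) p = Σ_{k=0}^{l-1} a_k² - Σ_{k=0}^{l-1} a_k a_{k+1}, and (2) Σ_{k=0}^{l-1} a_k a_{k+1} = Σ_{k=0}^{l-1} a_k a_{k+m} for all 2 ≤ m ≤ (l-1)/2, where all subscripts are taken mod l. -/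
/-!
Expanding `α σ₋₁(α)` gives `∑_d c_d ζ^d`, where `c_d = ∑_k a_k a_{k+d}` is the cyclic
autocorrelation of `a`. Using `1 = -(ζ + ⋯ + ζ^(l-1))`, the equation `α σ₋₁(α) = p` becomes
`∑_{d ≠ 0} (c_d - c_0 + p) ζ^d = 0`, so linear independence of `ζ, …, ζ^(l-1)` forces
`c_d = c_0 - p` for every `d ≠ 0`. Both claims are instances of this, since `c_0 = ∑ a_k²`.
-/

open Finset

theorem ZMod.sum_eq_sum_range {M : Type*} [AddCommMonoid M] (n : ℕ) [NeZero n]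
    (f : ZMod n → M) : ∑ d : ZMod n, f d = ∑ i ∈ range n, f i :=
  sum_nbij' ZMod.val (↑) (fun d _ => mem_range.2 d.val_lt) (fun _ _ => mem_univ _)
    (fun d _ => ZMod.natCast_zmod_val d) (fun _ hi => ZMod.val_cast_of_lt (mem_range.1 hi))
    (fun d _ => by rw [ZMod.natCast_zmod_val])

theorem pow_val_mul_pow_neg_val {M : Type*} [Monoid M] {n : ℕ} [NeZero n] {ζ : M}
    (hζ : ζ ^ n = 1) (j k : ZMod n) : ζ ^ j.val * ζ ^ (-k).val = ζ ^ (j - k).val := by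
  rw [← pow_add, pow_eq_pow_mod _ hζ, sub_eq_add_neg, ZMod.val_add]

section Autocorrelation

variable {R : Type*} [CommSemiring R] {n : ℕ} [NeZero n]

def cyclicAutocorr (a : ZMod n → R) (d : ZMod n) : R :=
  ∑ k, a k * a (k + d)

theorem cyclicAutocorr_zero (a : ZMod n → R) : cyclicAutocorr a 0 = ∑ k, a k ^ 2 := by
  simp only [cyclicAutocorr, add_zero, sq]

theorem cyclicAutocorr_comp {S : Type*} [CommSemiring S] (f : R →+* S) (a : ZMod n → R)
    (d : ZMod n) : cyclicAutocorr (f ∘ a) d = f (cyclicAutocorr a d) := by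
  simp only [cyclicAutocorr, Function.comp_apply, map_sum, map_mul]

theorem sum_mul_pow_val_mul_sum_mul_pow_neg_val {ζ : R} (hζ : ζ ^ n = 1) (a : ZMod n → R) :
    (∑ k, a k * ζ ^ k.val) * (∑ k, a k * ζ ^ (-k).val) =
      ∑ d, cyclicAutocorr a d * ζ ^ d.val := by
  have hshift : ∀ k : ZMod n, ∑ j, a j * ζ ^ j.val * (a k * ζ ^ (-k).val) =
      ∑ d, a k * a (k + d) * ζ ^ d.val := fun k =>
    (Fintype.sum_equiv (Equiv.addLeft k) _ _ fun d => by
      rw [Equiv.coe_addLeft, mul_mul_mul_comm, pow_val_mul_pow_neg_val hζ,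
        add_sub_cancel_left, mul_comm (a _)]).symm
  rw [sum_mul_sum, sum_comm, sum_congr rfl fun k _ => hshift k, sum_comm]
  simp only [cyclicAutocorr, sum_mul]

end Autocorrelation

namespace IsPrimitiveRoot

variable {L : Type*} [CommRing L] [IsDomain L] {n : ℕ} {ζ : L}

theorem sum_range_mul_pow_sub_eq (hζ : IsPrimitiveRoot ζ n) (hn : 1 < n) (x : ℕ → L) (y : L) :
    ∑ i ∈ range n, x i * ζ ^ i - y =
      ∑ i ∈ range (n - 1), (x (i + 1) - x 0 + y) * ζ ^ (i + 1) := by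
  obtain ⟨m, rfl⟩ : ∃ m, n = m + 1 := ⟨n - 1, by omega⟩
  have hgeom : ∑ i ∈ range m, ζ ^ (i + 1) = -1 := by
    have h := hζ.geom_sum_eq_zero hn
    rw [sum_range_succ'] at h
    simpa using eq_neg_of_add_eq_zero_left h
  calc ∑ i ∈ range (m + 1), x i * ζ ^ i - y
      = ∑ i ∈ range m, x (i + 1) * ζ ^ (i + 1) + (y - x 0) * ∑ i ∈ range m, ζ ^ (i + 1) := by
        rw [sum_range_succ', hgeom]; ring
    _ = _ := by
        rw [Nat.add_sub_cancel, mul_sum, ← sum_add_distrib]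
        exact sum_congr rfl fun i _ => by ring

theorem coeff_eq_of_sum_eq_algebraMap {K : Type*} [Field K] [Algebra K L] [NeZero n]
    (hζ : IsPrimitiveRoot ζ n) (hn : 1 < n)
    (hind : LinearIndependent K fun i : Fin (n - 1) => ζ ^ ((i : ℕ) + 1))
    (c : ZMod n → K) (p : K)
    (h : ∑ d, algebraMap K L (c d) * ζ ^ d.val = algebraMap K L p) (d : ZMod n) (hd : d ≠ 0) :
    c d = c 0 - p := by
  have hrange : ∑ i ∈ range n, algebraMap K L (c i) * ζ ^ i = algebraMap K L p := by
    rw [← h, ZMod.sum_eq_sum_range]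
    exact sum_congr rfl fun i hi => by rw [ZMod.val_cast_of_lt (mem_range.1 hi)]
  have hsum := hζ.sum_range_mul_pow_sub_eq hn (fun i => algebraMap K L (c i)) (algebraMap K L p)
  rw [hrange, sub_self, ← Fin.sum_univ_eq_sum_range] at hsum
  have hd_pos : 0 < d.val := (ZMod.val_pos).2 hd
  have hcoeff := Fintype.linearIndependent_iff.mp hind (fun i => c ((i : ℕ) + 1 : ℕ) - c 0 + p)
    (by simpa [Algebra.smul_def] using hsum.symm) ⟨d.val - 1, by have := d.val_lt; omega⟩
  rw [Nat.sub_add_cancel hd_pos, ZMod.natCast_zmod_val] at hcoeff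
  linear_combination hcoeff

end IsPrimitiveRoot

theorem coeff_relations_of_norm_general (l : ℕ) [NeZero l] (hl : l.Prime)
    {K L : Type*} [Field K] [Field L] [Algebra K L]
    (ζ : L) (hζ : IsPrimitiveRoot ζ l)
    (hind : LinearIndependent K fun i : Fin (l - 1) => ζ ^ ((i : ℕ) + 1))
    (a : ZMod l → K) (p : K)
    (hnorm : (∑ k : ZMod l, algebraMap K L (a k) * ζ ^ k.val) *
        (∑ k : ZMod l, algebraMap K L (a k) * ζ ^ (-k).val) = algebraMap K L p) :
    (p = ∑ k : ZMod l, a k ^ 2 - ∑ k : ZMod l, a k * a (k + 1)) ∧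
    (∀ m : ℕ, 2 ≤ m → m ≤ (l - 1) / 2 →
      ∑ k : ZMod l, a k * a (k + 1) = ∑ k : ZMod l, a k * a (k + (m : ZMod l))) := by
  have : Fact (1 < l) := ⟨hl.one_lt⟩
  have hkey : ∑ d, algebraMap K L (cyclicAutocorr a d) * ζ ^ d.val = algebraMap K L p := by
    have hexpand := sum_mul_pow_val_mul_sum_mul_pow_neg_val hζ.pow_eq_one (algebraMap K L ∘ a)
    simp only [Function.comp_apply, cyclicAutocorr_comp] at hexpand
    rw [← hnorm, hexpand]
  have hcorr : ∀ d : ZMod l, d ≠ 0 → ∑ k, a k * a (k + d) = ∑ k, a k ^ 2 - p := fun d hd => by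
    rw [← cyclicAutocorr_zero]
    exact hζ.coeff_eq_of_sum_eq_algebraMap hl.one_lt hind _ p hkey d hd
  refine ⟨by linear_combination hcorr 1 one_ne_zero, fun m hm2 hml => ?_⟩
  have hm : (m : ZMod l) ≠ 0 := by
    rw [Ne, ZMod.natCast_eq_zero_iff]
    exact Nat.not_dvd_of_pos_of_lt (by omega) (by omega)
  linear_combination hcorr 1 one_ne_zero - hcorr m hm

/-- Lemma 4.3: if `α = Σ a_k ζ_l^k` (with `a₀ = 0`) satisfies `α·σ₋₁(α) = p`, then
`p = Σ a_k² - Σ a_k a_{k+1}` and the correlation sums `Σ a_k a_{k+m}` agree for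
`1 ≤ m ≤ (l-1)/2`. -/
theorem coeff_relations_of_norm (l : ℕ) [NeZero l] (hl : l.Prime) (hodd : Odd l)
    {K L : Type*} [Field K] [Field L] [Algebra K L]
    (h2 : (2 : K) ≠ 0) (hlK : (l : K) ≠ 0)
    (ζ : L) (hζ : IsPrimitiveRoot ζ l)
    (hind : LinearIndependent K fun i : Fin (l - 1) => ζ ^ ((i : ℕ) + 1))
    (a : ZMod l → K) (ha0 : a 0 = 0) (p : K) (hp : p ≠ 0)
    (hnorm : (∑ k : ZMod l, algebraMap K L (a k) * ζ ^ k.val) *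
        (∑ k : ZMod l, algebraMap K L (a k) * ζ ^ (-k).val) = algebraMap K L p) :
    (p = ∑ k : ZMod l, a k ^ 2 - ∑ k : ZMod l, a k * a (k + 1)) ∧
    (∀ m : ℕ, 2 ≤ m → m ≤ (l - 1) / 2 →
      ∑ k : ZMod l, a k * a (k + 1) = ∑ k : ZMod l, a k * a (k + (m : ZMod l))) :=
  coeff_relations_of_norm_general l hl ζ hζ hind a p hnorm
end

section
/- Let l be an odd prime with l ≡ 1 mod f, l = ef+1, K a field with char K ∤ f!·l and Gal(K(ζ_l)/K) ≅ (Z/lZ)× = ⟨γ⟩. Set β = γ^e, L = K(ζ_l), and M = L^⟨β⟩, so Gal(L/M) is cyclic of order f generated by ζ_l ↦ ζ_l^β. Let α = Σ_{k=1}^{l-1} a_k ζ_l^k (a_0 = 0) satisfy N_{L/M}(α) = p ∈ K×. Define S_0 = Σ_{i_0+βi_1+⋯+β^{f-1}i_{f-1} ≡ 0 (mod l)} a_{i_0}⋯a_{i_{f-1}} and, for 1 ≤ m ≤ e, S_m = Σ_{i_0+βi_1+⋯+β^{f-1}i_{f-1} ≡ γ^m (mod l)} a_{i_0}⋯a_{i_{f-1}}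 (indices mod l, a_0=0). Then p = S_0 - S_1 and S_1 = S_2 = ⋯ = S_e. -/
/-!
Writing `ψ c = ζ ^ c.val` for the additive character of `ZMod l` attached to `ζ`, the conjugates
of `α = ∑ a_k ψ k` are `σ^t α = ∑ a_k ψ (β^t k)`, so expanding the norm gives
`∑_c S(c) ψ(c) = p ψ(0)`. Since the `ψ(c)`, `c ≠ 0`, are `K`-linearly independent, every
`K`-linear relation among all the `ψ(c)` is a multiple of `∑_c ψ(c) = 0`; hence
`S(c) = S(0) - p` for every `c ≠ 0`.
-/

open Finset

namespace AddChar

variable {M : Type*} [CommMonoid M]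

lemma map_sum_eq_prod {A ι : Type*} [AddCommMonoid A] (ψ : AddChar A M) (s : Finset ι)
    (x : ι → A) : ψ (∑ i ∈ s, x i) = ∏ i ∈ s, ψ (x i) := by
  classical
  induction s using Finset.induction_on with
  | empty => simp
  | insert i s hi ih => rw [sum_insert hi, prod_insert hi, map_add_eq_mul, ih]

lemma map_mul_eq_pow_val {l : ℕ} [NeZero l] (ψ : AddChar (ZMod l) M) (x y : ZMod l) :
    ψ (x * y) = ψ x ^ y.val := by
  rw [← map_nsmul_eq_pow, nsmul_eq_mul, ZMod.natCast_zmod_val, mul_comm]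

lemma linearIndependent_zmodChar_ne_zero {K L : Type*} [Semiring K] [CommRing L] [Module K L]
    {l : ℕ} [NeZero l] {ζ : L} (hζ : ζ ^ l = 1)
    (hind : LinearIndependent K fun i : Fin (l - 1) => ζ ^ ((i : ℕ) + 1)) :
    LinearIndependent K fun c : {c : ZMod l // c ≠ 0} => zmodChar l hζ c := by
  have hpos (c : {c : ZMod l // c ≠ 0}) : 0 < c.1.val := ZMod.val_pos.2 c.2
  let shift (c : {c : ZMod l // c ≠ 0}) : Fin (l - 1) :=
    ⟨c.1.val - 1, by have := c.1.val_lt; have := hpos c; omega⟩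
  have hshift : Function.Injective shift := fun c d h => by
    have := hpos c; have := hpos d
    simp only [shift, Fin.ext_iff] at h
    exact Subtype.ext (ZMod.val_injective l (by omega))
  convert hind.comp shift hshift using 1
  funext c
  simp [shift, zmodChar_apply, Nat.sub_add_cancel (hpos c)]

end AddChar

lemma AlgEquiv.pow_apply_addChar {K L : Type*} [CommSemiring K] [CommSemiring L] [Algebra K L]
    {l : ℕ} [NeZero l] (ψ : AddChar (ZMod l) L) (σ : L ≃ₐ[K] L) {β : ZMod l}
    (hσ : σ (ψ 1) = ψ β) (t : ℕ) (k : ZMod l) : (σ ^ t) (ψ k) = ψ (β ^ t * k) := by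
  induction t with
  | zero => simp
  | succ t ih =>
    have hψ (x : ZMod l) : ψ x = ψ 1 ^ x.val := by rw [← ψ.map_mul_eq_pow_val, one_mul]
    rw [pow_succ', AlgEquiv.mul_apply, ih, hψ, map_pow, hσ, ← ψ.map_mul_eq_pow_val, pow_succ',
      mul_assoc]

section CorrelationSum

variable {R K : Type*} [CommRing R] [Fintype R] [DecidableEq R] [CommSemiring K]

def correlationSum (a : R → K) (β : R) (f : ℕ) (c : R) : K :=
  ∑ v : Fin f → R, if ∑ j : Fin f, β ^ (j : ℕ) * v j = c then ∏ j : Fin f, a (v j) else 0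

lemma prod_sum_algebraMap_mul_addChar {L : Type*} [CommSemiring L] [Algebra K L]
    (ψ : AddChar R L) (a : R → K) (β : R) (f : ℕ) :
    ∏ j : Fin f, ∑ k, algebraMap K L (a k) * ψ (β ^ (j : ℕ) * k) =
      ∑ c, algebraMap K L (correlationSum a β f c) * ψ c := by
  simp only [Fintype.prod_sum, correlationSum, map_sum, apply_ite (algebraMap K L), map_zero,
    sum_mul, ite_mul, zero_mul]
  rw [sum_comm]
  refine sum_congr rfl fun v _ => ?_
  rw [sum_ite_eq, if_pos (mem_univ _), prod_mul_distrib, map_prod, ψ.map_sum_eq_prod]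

end CorrelationSum

lemma eq_sub_of_sum_algebraMap_mul_addChar_eq {G K L : Type*} [AddCommGroup G] [Fintype G]
    [DecidableEq G] [CommRing K] [CommRing L] [IsDomain L] [Algebra K L]
    {ψ : AddChar G L} (hψ : ψ ≠ 1) (hind : LinearIndependent K fun g : {g : G // g ≠ 0} => ψ g)
    {s : G → K} {p : K} (h : ∑ g, algebraMap K L (s g) * ψ g = algebraMap K L p)
    {g : G} (hg : g ≠ 0) : s g = s 0 - p := by
  -- subtracting `(s 0 - p) • ∑ g, ψ g = 0` turns the coefficient at `0` into `p`
  have hsum : ∑ g, (s g - (s 0 - p)) • ψ g = algebraMap K L p := by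
    simp only [sub_smul, sum_sub_distrib, ← smul_sum, AddChar.sum_eq_zero_of_ne_one hψ,
      smul_zero, sub_zero]
    simpa only [Algebra.smul_def] using h
  rw [Fintype.sum_eq_add_sum_subtype_ne _ 0, AddChar.map_zero_eq_one, sub_sub_cancel,
    Algebra.smul_def, mul_one, add_eq_left] at hsum
  exact sub_eq_zero.mp (Fintype.linearIndependent_iff.mp hind _ hsum ⟨g, hg⟩)

theorem norm_correlation_sums_general (l e f : ℕ) [NeZero l] (hl : l.Prime)
    {K L : Type*} [Field K] [Field L] [Algebra K L]
    (ζ : L) (hζ : IsPrimitiveRoot ζ l)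
    (hind : LinearIndependent K fun i : Fin (l - 1) => ζ ^ ((i : ℕ) + 1))
    (γ : (ZMod l)ˣ)
    (σ : L ≃ₐ[K] L) (hσ : σ ζ = ζ ^ (((γ ^ e : (ZMod l)ˣ) : ZMod l)).val)
    (a : ZMod l → K) (p : K)
    (hnorm : (∏ t ∈ Finset.range f,
        (σ ^ t) (∑ k : ZMod l, algebraMap K L (a k) * ζ ^ k.val)) = algebraMap K L p) :
    letI β : ZMod l := ((γ ^ e : (ZMod l)ˣ) : ZMod l)
    letI S : ZMod l → K := fun c =>
      ∑ v : Fin f → ZMod l,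
        if (∑ j : Fin f, β ^ (j : ℕ) * v j) = c then ∏ j : Fin f, a (v j) else 0
    p = S 0 - S (γ : ZMod l) ∧
      ∀ m : ℕ, 1 ≤ m → m ≤ e → S (γ : ZMod l) = S (((γ : ZMod l)) ^ m) := by
  have : Fact l.Prime := ⟨hl⟩
  set S := correlationSum a ((γ ^ e : (ZMod l)ˣ) : ZMod l) f
  set ψ := AddChar.zmodChar l hζ.pow_eq_one
  have hψ1 : ψ 1 = ζ := by rw [AddChar.zmodChar_apply, ZMod.val_one, pow_one]
  have hψ : ψ ≠ 1 := (AddChar.zmod_char_ne_one_iff l ψ).2 (hψ1 ▸ hζ.ne_one hl.one_lt)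
  have hexpand : ∑ c, algebraMap K L (S c) * ψ c = algebraMap K L p := by
    rw [← hnorm, ← Fin.prod_univ_eq_prod_range, ← prod_sum_algebraMap_mul_addChar]
    refine prod_congr rfl fun j _ => ?_
    simp only [map_sum, map_mul, AlgEquiv.commutes]
    refine sum_congr rfl fun k _ => congrArg _ (σ.pow_apply_addChar ψ ?_ j k).symm
    rw [hψ1, hσ]
    rfl
  have hconst {c : ZMod l} (hc : c ≠ 0) : S c = S 0 - p :=
    eq_sub_of_sum_algebraMap_mul_addChar_eq hψ
      (AddChar.linearIndependent_zmodChar_ne_zero hζ.pow_eq_one hind) hexpand hc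
  have hγ : (γ : ZMod l) ≠ 0 := γ.ne_zero
  refine ⟨?_, fun m _ _ => ?_⟩
  · show p = S 0 - S γ
    rw [hconst hγ, sub_sub_cancel]
  · show S γ = S (γ ^ m)
    rw [hconst hγ, hconst (pow_ne_zero m hγ)]

/-- Lemma 5.2: if `α = Σ_{k=1}^{l-1} a_k ζ_l^k` satisfies `N_{L/M}(α) = p ∈ Kˣ`, where
`M` is the fixed field of `σ : ζ_l ↦ ζ_l^β` with `β = γ^e`, then `p = S₀ - S₁` and
`S₁ = S₂ = ⋯ = S_e` for the correlation sums `S_m`. -/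
theorem norm_correlation_sums (l e f : ℕ) [NeZero l] (hl : l.Prime) (hodd : Odd l)
    (hf : 2 ≤ f) (hlef : l = e * f + 1)
    {K L : Type*} [Field K] [Field L] [Algebra K L]
    (hcharf : (Nat.factorial f : K) ≠ 0) (hlK : (l : K) ≠ 0)
    (ζ : L) (hζ : IsPrimitiveRoot ζ l)
    (hind : LinearIndependent K fun i : Fin (l - 1) => ζ ^ ((i : ℕ) + 1))
    (γ : (ZMod l)ˣ) (hγ : ∀ u : (ZMod l)ˣ, u ∈ Subgroup.zpowers γ)
    (σ : L ≃ₐ[K] L) (hσ : σ ζ = ζ ^ (((γ ^ e : (ZMod l)ˣ) : ZMod l)).val)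
    (a : ZMod l → K) (ha0 : a 0 = 0) (p : K) (hp : p ≠ 0)
    (hnorm : (∏ t ∈ Finset.range f,
        (σ ^ t) (∑ k : ZMod l, algebraMap K L (a k) * ζ ^ k.val)) = algebraMap K L p) :
    letI β : ZMod l := ((γ ^ e : (ZMod l)ˣ) : ZMod l)
    letI S : ZMod l → K := fun c =>
      ∑ v : Fin f → ZMod l,
        if (∑ j : Fin f, β ^ (j : ℕ) * v j) = c then ∏ j : Fin f, a (v j) else 0
    p = S 0 - S (γ : ZMod l) ∧
      ∀ m : ℕ, 1 ≤ m → m ≤ e → S (γ : ZMod l) = S (((γ : ZMod l)) ^ m) :=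
  norm_correlation_sums_general l e f hl ζ hζ hind γ σ hσ a p hnorm
end

section
/- Let K be a field, and define on K⁴ the forms q(x) = x₁²+x₂²+x₃²+x₄² - (x₁x₂+x₂x₃+x₃x₄) and f₁(x) = (x₁x₂+x₂x₃+x₃x₄) - (x₁x₃+x₂x₄+x₄x₁). For d = 1, define z_k = -(Σ_{i=1}^{4} x_{-i} y_{k-i} - Σ_{i=1}^{4} x_{-i} y_{-i}) for k = 1,…,4, with subscripts mod 5 and x₀ = y₀ = 0. Then the polynomial identities q(z) = q(x)q(y) + f₁(x)f₁(y) and f₁(z) = q(x)f₁(y) + f₁(x)q(y) + f₁(x)f₁(y) hold in K[x₁,…,x₄,y₁,…,y₄]. In particular, if f₁(x) = f₁(y) = 0 then q(z) = q(x)q(y) and f₁(z) = 0. -/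
/-- The quadratic form `q` of the case `l = 5`. -/
def q5 {K : Type*} [Field K] (x₁ x₂ x₃ x₄ : K) : K :=
  x₁ ^ 2 + x₂ ^ 2 + x₃ ^ 2 + x₄ ^ 2 - (x₁ * x₂ + x₂ * x₃ + x₃ * x₄)

/-- The quadric `f₁` of the case `l = 5`. -/
def f5 {K : Type*} [Field K] (x₁ x₂ x₃ x₄ : K) : K :=
  (x₁ * x₂ + x₂ * x₃ + x₃ * x₄) - (x₁ * x₃ + x₂ * x₄ + x₄ * x₁)

section Composition

variable {K : Type*} [Field K] (x₁ x₂ x₃ x₄ y₁ y₂ y₃ y₄ : K)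

theorem q5_composition :
    q5 (-(x₃ * y₄ + x₂ * y₃ + x₁ * y₂) + (x₄ * y₄ + x₃ * y₃ + x₂ * y₂ + x₁ * y₁))
      (-(x₄ * y₁ + x₂ * y₄ + x₁ * y₃) + (x₄ * y₄ + x₃ * y₃ + x₂ * y₂ + x₁ * y₁))
      (-(x₄ * y₂ + x₃ * y₁ + x₁ * y₄) + (x₄ * y₄ + x₃ * y₃ + x₂ * y₂ + x₁ * y₁))
      (-(x₄ * y₃ + x₃ * y₂ + x₂ * y₁) + (x₄ * y₄ + x₃ * y₃ + x₂ * y₂ + x₁ * y₁)) =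
      q5 x₁ x₂ x₃ x₄ * q5 y₁ y₂ y₃ y₄ + f5 x₁ x₂ x₃ x₄ * f5 y₁ y₂ y₃ y₄ := by
  simp only [q5, f5]
  ring

theorem f5_composition :
    f5 (-(x₃ * y₄ + x₂ * y₃ + x₁ * y₂) + (x₄ * y₄ + x₃ * y₃ + x₂ * y₂ + x₁ * y₁))
      (-(x₄ * y₁ + x₂ * y₄ + x₁ * y₃) + (x₄ * y₄ + x₃ * y₃ + x₂ * y₂ + x₁ * y₁))
      (-(x₄ * y₂ + x₃ * y₁ + x₁ * y₄) + (x₄ * y₄ + x₃ * y₃ + x₂ * y₂ + x₁ * y₁))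
      (-(x₄ * y₃ + x₃ * y₂ + x₂ * y₁) + (x₄ * y₄ + x₃ * y₃ + x₂ * y₂ + x₁ * y₁)) =
      q5 x₁ x₂ x₃ x₄ * f5 y₁ y₂ y₃ y₄ + f5 x₁ x₂ x₃ x₄ * q5 y₁ y₂ y₃ y₄
        + f5 x₁ x₂ x₃ x₄ * f5 y₁ y₂ y₃ y₄ := by
  simp only [q5, f5]
  ring

end Composition

/-- Polynomial identities for the `d = 1` composition in the case `l = 5`:
`q(z) = q(x)q(y) + f₁(x)f₁(y)` and `f₁(z) = q(x)f₁(y) + f₁(x)q(y) + f₁(x)f₁(y)`;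
in particular `q` is multiplicative on the variety `{f₁ = 0}`. -/
theorem mult_quadratic_l5 {K : Type*} [Field K] (x₁ x₂ x₃ x₄ y₁ y₂ y₃ y₄ : K) :
    letI S : K := x₄ * y₄ + x₃ * y₃ + x₂ * y₂ + x₁ * y₁
    letI z₁ : K := -(x₃ * y₄ + x₂ * y₃ + x₁ * y₂) + S
    letI z₂ : K := -(x₄ * y₁ + x₂ * y₄ + x₁ * y₃) + S
    letI z₃ : K := -(x₄ * y₂ + x₃ * y₁ + x₁ * y₄) + S
    letI z₄ : K := -(x₄ * y₃ + x₃ * y₂ + x₂ * y₁) + S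
    (q5 z₁ z₂ z₃ z₄ = q5 x₁ x₂ x₃ x₄ * q5 y₁ y₂ y₃ y₄ + f5 x₁ x₂ x₃ x₄ * f5 y₁ y₂ y₃ y₄) ∧
    (f5 z₁ z₂ z₃ z₄ = q5 x₁ x₂ x₃ x₄ * f5 y₁ y₂ y₃ y₄ + f5 x₁ x₂ x₃ x₄ * q5 y₁ y₂ y₃ y₄
        + f5 x₁ x₂ x₃ x₄ * f5 y₁ y₂ y₃ y₄) ∧
    (f5 x₁ x₂ x₃ x₄ = 0 → f5 y₁ y₂ y₃ y₄ = 0 →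
      q5 z₁ z₂ z₃ z₄ = q5 x₁ x₂ x₃ x₄ * q5 y₁ y₂ y₃ y₄ ∧ f5 z₁ z₂ z₃ z₄ = 0) := by
  refine ⟨q5_composition .., f5_composition .., fun hx hy => ⟨?_, ?_⟩⟩
  · rw [q5_composition, hx, zero_mul, add_zero]
  · rw [f5_composition, hx, hy]
    ring
end

section
/- Let p, q be primes (not necessarily distinct) and r, s positive integers with p^r ≡ 1 mod 5 and q^s ≡ 1 mod 5. Suppose integers (x₁,x₂,x₃,x₄) satisfy 16p^r = x₁² + 125x₂² + 50x₃² + 50x₄² and x₁x₂ = x₃² - 4x₃x₄ - x₄², and (y₁,y₂,y₃,y₄) satisfy the analogous system for q^s. Define z₁ = -(1/4)(x₁y₁ + 125x₂y₂ + 50x₃y₃ + 50x₄y₄), z₂ = -(1/4)(x₁y₂ + x₂y₁ - 2x₃y₃ + 4x₃y₄ + 4x₄y₃ + 2x₄y₄), z₃ = -(1/4)(x₁y₃ - 5x₂y₃ + 10x₂y₄ - x₃y₁ + 5x₃y₂ - 10x₄y₂), z₄ = -(1/4)(x₁y₄ + 10x₂y₃ + 5x₂y₄ - 10x₃y₂ -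 x₄y₁ - 5x₄y₂). Then 16p^r q^s = z₁² + 125z₂² + 50z₃² + 50z₄² and z₁z₂ = z₃² - 4z₃z₄ - z₄². -/
/-!
With `Q x = x₁² + 125x₂² + 50x₃² + 50x₄²` and `F x = x₁x₂ - (x₃² - 4x₃x₄ - x₄²)`, the bilinear
map `x ∘ y` whose coordinates are the bracketed sums defining the `zᵢ` satisfies the ring identities
`Q (x ∘ y) = Q x * Q y + 500 * F x * F y` and `F (x ∘ y) = Q x * F y + Q y * F x`
(so `Q + √500 F` is multiplicative). On the locus `F = 0` the norm `Q` is therefore multiplicative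
and the locus is closed under `∘`; the factor `-1/4` rescales both quadratic forms by `1/16`.
-/

variable {R : Type*} [CommRing R]

def dicksonNorm (v : Fin 4 → R) : R :=
  v 0 ^ 2 + 125 * v 1 ^ 2 + 50 * v 2 ^ 2 + 50 * v 3 ^ 2

def dicksonDefect (v : Fin 4 → R) : R :=
  v 0 * v 1 - (v 2 ^ 2 - 4 * v 2 * v 3 - v 3 ^ 2)

def dicksonMul (x y : Fin 4 → R) : Fin 4 → R :=
  ![x 0 * y 0 + 125 * x 1 * y 1 + 50 * x 2 * y 2 + 50 * x 3 * y 3,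
    x 0 * y 1 + x 1 * y 0 - 2 * x 2 * y 2 + 4 * x 2 * y 3 + 4 * x 3 * y 2 + 2 * x 3 * y 3,
    x 0 * y 2 - 5 * x 1 * y 2 + 10 * x 1 * y 3 - x 2 * y 0 + 5 * x 2 * y 1 - 10 * x 3 * y 1,
    x 0 * y 3 + 10 * x 1 * y 2 + 5 * x 1 * y 3 - 10 * x 2 * y 1 - x 3 * y 0 - 5 * x 3 * y 1]

theorem dicksonNorm_dicksonMul (x y : Fin 4 → R) :
    dicksonNorm (dicksonMul x y) =
      dicksonNorm x * dicksonNorm y + 500 * dicksonDefect x * dicksonDefect y := by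
  simp only [dicksonNorm, dicksonDefect, dicksonMul, Matrix.cons_val]
  ring

theorem dicksonDefect_dicksonMul (x y : Fin 4 → R) :
    dicksonDefect (dicksonMul x y) =
      dicksonNorm x * dicksonDefect y + dicksonNorm y * dicksonDefect x := by
  simp only [dicksonNorm, dicksonDefect, dicksonMul, Matrix.cons_val]
  ring

theorem dicksonNorm_smul (c : R) (v : Fin 4 → R) :
    dicksonNorm (c • v) = c ^ 2 * dicksonNorm v := by
  simp only [dicksonNorm, Pi.smul_apply, smul_eq_mul]
  ring

theorem dicksonDefect_smul (c : R) (v : Fin 4 → R) :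
    dicksonDefect (c • v) = c ^ 2 * dicksonDefect v := by
  simp only [dicksonDefect, Pi.smul_apply, smul_eq_mul]
  ring

theorem dickson_l5_composition_general (p q : ℕ)
    (r s : ℕ)
    (x₁ x₂ x₃ x₄ y₁ y₂ y₃ y₄ : ℤ)
    (hx1 : 16 * (p : ℤ) ^ r = x₁ ^ 2 + 125 * x₂ ^ 2 + 50 * x₃ ^ 2 + 50 * x₄ ^ 2)
    (hx2 : x₁ * x₂ = x₃ ^ 2 - 4 * x₃ * x₄ - x₄ ^ 2)
    (hy1 : 16 * (q : ℤ) ^ s = y₁ ^ 2 + 125 * y₂ ^ 2 + 50 * y₃ ^ 2 + 50 * y₄ ^ 2)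
    (hy2 : y₁ * y₂ = y₃ ^ 2 - 4 * y₃ * y₄ - y₄ ^ 2) :
    letI z₁ : ℚ := -(1 / 4) * ((x₁ : ℚ) * y₁ + 125 * x₂ * y₂ + 50 * x₃ * y₃ + 50 * x₄ * y₄)
    letI z₂ : ℚ := -(1 / 4) * ((x₁ : ℚ) * y₂ + x₂ * y₁ - 2 * x₃ * y₃ + 4 * x₃ * y₄
        + 4 * x₄ * y₃ + 2 * x₄ * y₄)
    letI z₃ : ℚ := -(1 / 4) * ((x₁ : ℚ) * y₃ - 5 * x₂ * y₃ + 10 * x₂ * y₄ - x₃ * y₁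
        + 5 * x₃ * y₂ - 10 * x₄ * y₂)
    letI z₄ : ℚ := -(1 / 4) * ((x₁ : ℚ) * y₄ + 10 * x₂ * y₃ + 5 * x₂ * y₄ - 10 * x₃ * y₂
        - x₄ * y₁ - 5 * x₄ * y₂)
    16 * (p : ℚ) ^ r * (q : ℚ) ^ s = z₁ ^ 2 + 125 * z₂ ^ 2 + 50 * z₃ ^ 2 + 50 * z₄ ^ 2 ∧
      z₁ * z₂ = z₃ ^ 2 - 4 * z₃ * z₄ - z₄ ^ 2 := by
  set x : Fin 4 → ℚ := ![(x₁ : ℚ), x₂, x₃, x₄]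
  set y : Fin 4 → ℚ := ![(y₁ : ℚ), y₂, y₃, y₄]
  have hx : dicksonDefect x = 0 := by
    simp only [x, dicksonDefect, Matrix.cons_val, sub_eq_zero]
    exact_mod_cast hx2
  have hy : dicksonDefect y = 0 := by
    simp only [y, dicksonDefect, Matrix.cons_val, sub_eq_zero]
    exact_mod_cast hy2
  have hxn : dicksonNorm x = 16 * (p : ℚ) ^ r := by
    simp only [x, dicksonNorm, Matrix.cons_val]
    exact_mod_cast hx1.symm
  have hyn : dicksonNorm y = 16 * (q : ℚ) ^ s := by
    simp only [y, dicksonNorm, Matrix.cons_val]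
    exact_mod_cast hy1.symm
  have hz : dicksonNorm ((-(1 / 4) : ℚ) • dicksonMul x y) = 16 * (p : ℚ) ^ r * (q : ℚ) ^ s := by
    rw [dicksonNorm_smul, dicksonNorm_dicksonMul, hx, hy, hxn, hyn]
    ring
  have hz' : dicksonDefect ((-(1 / 4) : ℚ) • dicksonMul x y) = 0 := by
    rw [dicksonDefect_smul, dicksonDefect_dicksonMul, hx, hy]
    ring
  simp only [dicksonNorm, dicksonDefect, dicksonMul, x, y, Pi.smul_apply, smul_eq_mul,
    Matrix.cons_val] at hz hz'
  exact ⟨hz.symm, sub_eq_zero.1 hz'⟩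

/-- Composition law on solutions of Dickson's quintic Diophantine system: from integer solutions
for `p^r` and `q^s` one obtains a (rational) solution for `p^r q^s`. -/
theorem dickson_l5_composition (p q : ℕ) (hp : p.Prime) (hq : q.Prime)
    (r s : ℕ) (hr : 0 < r) (hs : 0 < s)
    (hpr : p ^ r % 5 = 1) (hqs : q ^ s % 5 = 1)
    (x₁ x₂ x₃ x₄ y₁ y₂ y₃ y₄ : ℤ)
    (hx1 : 16 * (p : ℤ) ^ r = x₁ ^ 2 + 125 * x₂ ^ 2 + 50 * x₃ ^ 2 + 50 * x₄ ^ 2)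
    (hx2 : x₁ * x₂ = x₃ ^ 2 - 4 * x₃ * x₄ - x₄ ^ 2)
    (hy1 : 16 * (q : ℤ) ^ s = y₁ ^ 2 + 125 * y₂ ^ 2 + 50 * y₃ ^ 2 + 50 * y₄ ^ 2)
    (hy2 : y₁ * y₂ = y₃ ^ 2 - 4 * y₃ * y₄ - y₄ ^ 2) :
    letI z₁ : ℚ := -(1 / 4) * ((x₁ : ℚ) * y₁ + 125 * x₂ * y₂ + 50 * x₃ * y₃ + 50 * x₄ * y₄)
    letI z₂ : ℚ := -(1 / 4) * ((x₁ : ℚ) * y₂ + x₂ * y₁ - 2 * x₃ * y₃ + 4 * x₃ * y₄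
        + 4 * x₄ * y₃ + 2 * x₄ * y₄)
    letI z₃ : ℚ := -(1 / 4) * ((x₁ : ℚ) * y₃ - 5 * x₂ * y₃ + 10 * x₂ * y₄ - x₃ * y₁
        + 5 * x₃ * y₂ - 10 * x₄ * y₂)
    letI z₄ : ℚ := -(1 / 4) * ((x₁ : ℚ) * y₄ + 10 * x₂ * y₃ + 5 * x₂ * y₄ - 10 * x₃ * y₂
        - x₄ * y₁ - 5 * x₄ * y₂)
    16 * (p : ℚ) ^ r * (q : ℚ) ^ s = z₁ ^ 2 + 125 * z₂ ^ 2 + 50 * z₃ ^ 2 + 50 * z₄ ^ 2 ∧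
      z₁ * z₂ = z₃ ^ 2 - 4 * z₃ * z₄ - z₄ ^ 2 :=
  dickson_l5_composition_general p q r s x₁ x₂ x₃ x₄ y₁ y₂ y₃ y₄ hx1 hx2 hy1 hy2
end

section
/- Let l be an odd prime, d ∈ (Z/lZ)×, f ≥ 1, and K a field. On K^{l-1} define x ∗_d y = z with z_k = (-1)^{f-1}(Σ_{i=1}^{l-1} x_{-d^{-1}i} y_{k-i} - Σ_{i=1}^{l-1} x_{-d^{-1}i} y_{-i}) (subscripts mod l, x₀ = y₀ = 0). Let 𝟙 := (-1)^f·(1,1,…,1) ∈ K^{l-1}. Then (𝟙 ∗_d x)_k = x_k and (x ∗_d 𝟙)_k = x_{-d^{-1}k} for all k. In particular 𝟙 is a two-sided identity for ∗_{-1}. -/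
/-!
Write `𝟙 = (-1)^f (1 - δ₀)`. A sum `Σ_i 𝟙_{σ i} g_i` with `σ i = 0 ↔ i = a` equals
`(-1)^f (Σ_i g_i - g_a)`, so in the difference defining `∗_d` the total sums cancel and only
`(-1)^f (g_0 - g_k) = -(-1)^f g_k` survives; the prefactor `(-1)^{f-1}` turns this into `g_k`.
For `𝟙 ∗_d x` one uses that multiplication by the unit `-d⁻¹` fixes `0` and nothing else.
-/

open Finset

/-- Thaine's `d`-composition on `K^{l-1}`, realized on functions `ZMod l → K` vanishing at `0`:
`(x ∗_d y)_k = (-1)^{f-1}(Σ_i x_{-d⁻¹i} y_{k-i} - Σ_i x_{-d⁻¹i} y_{-i})`. -/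
def starOp (l : ℕ) [NeZero l] {K : Type*} [Field K] (f : ℕ) (d : (ZMod l)ˣ)
    (x y : ZMod l → K) : ZMod l → K := fun k =>
  (-1 : K) ^ (f - 1) *
    ((∑ i : ZMod l, x (-(↑d⁻¹ : ZMod l) * i) * y (k - i)) -
      (∑ i : ZMod l, x (-(↑d⁻¹ : ZMod l) * i) * y (-i)))

theorem Finset.sum_ite_eq_zero_else_mul {ι R : Type*} [Fintype ι] [DecidableEq ι]
    [NonUnitalNonAssocRing R] (a : ι) (c : R) (g : ι → R) :
    ∑ i, (if i = a then 0 else c) * g i = c * (∑ i, g i - g a) := by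
  have ite_split : ∀ i, (if i = a then 0 else c) * g i = c * g i - if a = i then c * g i else 0 := by
    intro i
    rcases eq_or_ne i a with rfl | h
    · simp
    · simp [h, Ne.symm h]
  simp only [ite_split, sum_sub_distrib, sum_ite_eq, mem_univ, if_true, mul_sub, mul_sum]

theorem neg_one_pow_pred_mul_neg_one_pow {R : Type*} [Monoid R] [HasDistribNeg R] {f : ℕ}
    (hf : 1 ≤ f) : (-1 : R) ^ (f - 1) * (-1) ^ f = -1 := by
  obtain ⟨n, rfl⟩ := Nat.exists_eq_add_of_le' hf
  rw [Nat.add_sub_cancel, pow_succ, ← mul_assoc, ← pow_add, Even.neg_one_pow ⟨n, rfl⟩, one_mul]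

def starOne (l : ℕ) (K : Type*) [Field K] (f : ℕ) : ZMod l → K :=
  fun k => if k = 0 then 0 else (-1 : K) ^ f

section

variable {l : ℕ} [NeZero l] {K : Type*} [Field K] {f : ℕ}

theorem starOp_starOne_left (hf : 1 ≤ f) (d : (ZMod l)ˣ) {x : ZMod l → K} (hx0 : x 0 = 0) :
    starOp l f d (starOne l K f) x = x := by
  have twist_eq_zero : ∀ i : ZMod l, -(↑d⁻¹ : ZMod l) * i = 0 ↔ i = 0 := fun i => by
    rw [← Units.val_neg, Units.mul_right_eq_zero]
  have conv : ∀ c : ZMod l, ∑ i, starOne l K f (-(↑d⁻¹ : ZMod l) * i) * x (c - i)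
      = (-1) ^ f * (∑ i, x i - x c) := fun c => by
    simp only [starOne, twist_eq_zero]
    rw [sum_ite_eq_zero_else_mul, sub_zero,
      Fintype.sum_equiv (Equiv.subLeft c) (fun i => x (c - i)) x fun _ => rfl]
  funext k
  have conv_zero := conv 0
  simp only [zero_sub] at conv_zero
  simp only [starOp, conv k, conv_zero, hx0]
  linear_combination -x k * neg_one_pow_pred_mul_neg_one_pow (R := K) hf

theorem starOp_starOne_right (hf : 1 ≤ f) (d : (ZMod l)ˣ) {x : ZMod l → K} (hx0 : x 0 = 0)
    (k : ZMod l) : starOp l f d x (starOne l K f) k = x (-(↑d⁻¹ : ZMod l) * k) := by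
  set y : ZMod l → K := fun i => x (-(↑d⁻¹ : ZMod l) * i)
  have conv : ∀ c : ZMod l, ∑ i, y i * starOne l K f (c - i)
      = (-1) ^ f * (∑ i, y i - y c) := fun c => by
    rw [← sum_ite_eq_zero_else_mul]
    refine sum_congr rfl fun i _ => ?_
    rw [mul_comm]
    simp only [starOne, sub_eq_zero, @eq_comm _ c]
  have conv_zero := conv 0
  simp only [zero_sub, y, mul_zero, hx0] at conv_zero
  simp only [starOp, y] at conv ⊢
  rw [conv k, conv_zero]
  linear_combination -x (-(↑d⁻¹ : ZMod l) * k) * neg_one_pow_pred_mul_neg_one_pow (R := K) hf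

end

theorem starOp_unital_general (l : ℕ) [NeZero l]
    {K : Type*} [Field K] (f : ℕ) (hf : 1 ≤ f) (d : (ZMod l)ˣ)
    (x : ZMod l → K) (hx0 : x 0 = 0) :
    letI one : ZMod l → K := fun k => if k = 0 then 0 else (-1 : K) ^ f
    (∀ k : ZMod l, k ≠ 0 → starOp l f d one x k = x k) ∧
    (∀ k : ZMod l, k ≠ 0 → starOp l f d x one k = x (-(↑d⁻¹ : ZMod l) * k)) ∧
    starOp l f (-1) one x = x ∧ starOp l f (-1) x one = x := by
  refine ⟨fun k _ => congrFun (starOp_starOne_left hf d hx0) k,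
    fun k _ => starOp_starOne_right hf d hx0 k,
    starOp_starOne_left hf (-1) hx0,
    funext fun k => ?_⟩
  exact (starOp_starOne_right hf (-1) hx0 k).trans (by simp)

/-- The element `𝟙 = (-1)^f(1,…,1)` satisfies `(𝟙 ∗_d x)_k = x_k` and
`(x ∗_d 𝟙)_k = x_{-d⁻¹k}`; in particular `𝟙` is a two-sided identity for `∗_{-1}`. -/
theorem starOp_unital (l : ℕ) [NeZero l] (hl : l.Prime) (hodd : Odd l)
    {K : Type*} [Field K] (f : ℕ) (hf : 1 ≤ f) (d : (ZMod l)ˣ)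
    (x : ZMod l → K) (hx0 : x 0 = 0) :
    letI one : ZMod l → K := fun k => if k = 0 then 0 else (-1 : K) ^ f
    (∀ k : ZMod l, k ≠ 0 → starOp l f d one x k = x k) ∧
    (∀ k : ZMod l, k ≠ 0 → starOp l f d x one k = x (-(↑d⁻¹ : ZMod l) * k)) ∧
    starOp l f (-1) one x = x ∧ starOp l f (-1) x one = x :=
  starOp_unital_general l f hf d x hx0
end

section
/- Let l be an odd prime, d₁, d₂ ∈ (Z/lZ)×, f ≥ 1, and K a field. With the operation x ∗_d y defined by z_k = (-1)^{f-1}(Σ_{i=1}^{l-1} x_{-d^{-1}i} y_{k-i} - Σ_{i=1}^{l-1} x_{-d^{-1}i} y_{-i}) on K^{l-1}, one has x ∗_{d₁} (y ∗_{d₂} z) = (x ∗_{-d₂^{-1}d₁} y) ∗_{d₂} z for all x, y, z ∈ K^{l-1}. In particular, ∗_{-1} is associative. -/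
open Finset

/-! `x ∗_d y = ε (g - g 0)` with `ε = (-1)^(f-1)` and `g` the convolution of `i ↦ x (-d⁻¹ i)`
with `y`. Such twisted convolutions are associative up to a change of the twist, by the change of
variables `(i, j) ↦ (u i, i + j)`; the normalizations `g ↦ g - g 0` only add terms that do not
depend on the point `k`, so they cancel in both triple products. -/

section TwistedConv

variable {R K : Type*} [Ring R] [Fintype R] [CommRing K]

def twistedConv (c : R) (x y : R → K) (k : R) : K :=
  ∑ i, x (c * i) * y (k - i)

theorem twistedConv_assoc (c : R) (u : Rˣ) (x y z : R → K) (k : R) :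
    twistedConv c x (twistedConv (u : R) y z) k =
      twistedConv (u : R) (twistedConv (c * (↑u⁻¹ : R)) x y) z k := by
  simp only [twistedConv, mul_sum, sum_mul]
  conv_rhs => rw [sum_comm]
  refine Fintype.sum_equiv (Units.mulLeft u) _ _ fun i => ?_
  refine Fintype.sum_equiv (Equiv.addLeft i) _ _ fun j => ?_
  simp only [Units.mulLeft_apply, Equiv.coe_addLeft, mul_add, ← mul_assoc,
    Units.inv_mul_cancel_right, add_sub_cancel_left, sub_add_eq_sub_sub]

theorem twistedConv_mul_sub_right (c : R) (a b : K) (x w : R → K) (k : R) :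
    twistedConv c x (fun m => a * (w m - b)) k =
      a * (twistedConv c x w k - b * ∑ i, x (c * i)) := by
  simp only [twistedConv, mul_sum, mul_sub, sum_sub_distrib]
  congr 1 <;> exact sum_congr rfl fun i _ => by ring

theorem twistedConv_mul_sub_left (c : R) (a b : K) (w z : R → K) (k : R) :
    twistedConv c (fun m => a * (w m - b)) z k =
      a * (twistedConv c w z k - b * ∑ i, z i) := by
  rw [← Fintype.sum_equiv (Equiv.subLeft k) (fun i => z (k - i)) z fun _ => rfl]
  simp only [twistedConv, mul_sum, mul_sub, sub_mul, sum_sub_distrib]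
  congr 1 <;> exact sum_congr rfl fun i _ => by ring

end TwistedConv

theorem starOp_eq_twistedConv {l : ℕ} [NeZero l] {K : Type*} [Field K] (f : ℕ) (d : (ZMod l)ˣ)
    (x y : ZMod l → K) :
    starOp l f d x y = fun k => (-1 : K) ^ (f - 1) *
      (twistedConv (↑(-d⁻¹) : ZMod l) x y k - twistedConv (↑(-d⁻¹) : ZMod l) x y 0) := by
  funext k
  simp only [starOp, twistedConv, Units.val_neg, zero_sub]

theorem starOp_starOp {l : ℕ} [NeZero l] {K : Type*} [Field K] (f : ℕ) (d₁ d₂ : (ZMod l)ˣ)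
    (x y z : ZMod l → K) :
    starOp l f d₁ x (starOp l f d₂ y z) = starOp l f d₂ (starOp l f (-(d₂⁻¹ * d₁)) x y) z := by
  have hunit : (↑(-(-(d₂⁻¹ * d₁))⁻¹) : ZMod l) = ↑(-d₁⁻¹) * ↑(-d₂⁻¹)⁻¹ := by
    simp [mul_comm]
  funext k
  simp only [starOp_eq_twistedConv, twistedConv_mul_sub_right, twistedConv_mul_sub_left, hunit,
    twistedConv_assoc]
  ring

theorem starOp_assoc_law_general (l : ℕ) [NeZero l]
    {K : Type*} [Field K] (f : ℕ) (d₁ d₂ : (ZMod l)ˣ)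
    (x y z : ZMod l → K) :
    starOp l f d₁ x (starOp l f d₂ y z) = starOp l f d₂ (starOp l f (-(d₂⁻¹ * d₁)) x y) z ∧
    starOp l f (-1) x (starOp l f (-1) y z) = starOp l f (-1) (starOp l f (-1) x y) z := by
  refine ⟨starOp_starOp f d₁ d₂ x y z, ?_⟩
  simpa using starOp_starOp f (-1) (-1) x y z

/-- `x ∗_{d₁} (y ∗_{d₂} z) = (x ∗_{-d₂⁻¹d₁} y) ∗_{d₂} z`; in particular `∗_{-1}` is
associative. -/
theorem starOp_assoc_law (l : ℕ) [NeZero l] (hl : l.Prime) (hodd : Odd l)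
    {K : Type*} [Field K] (f : ℕ) (hf : 1 ≤ f) (d₁ d₂ : (ZMod l)ˣ)
    (x y z : ZMod l → K) (hx0 : x 0 = 0) (hy0 : y 0 = 0) (hz0 : z 0 = 0) :
    starOp l f d₁ x (starOp l f d₂ y z) = starOp l f d₂ (starOp l f (-(d₂⁻¹ * d₁)) x y) z ∧
    starOp l f (-1) x (starOp l f (-1) y z) = starOp l f (-1) (starOp l f (-1) x y) z :=
  starOp_assoc_law_general l f d₁ d₂ x y z
end

section
/- Let l be an odd prime, d ∈ (Z/lZ)×, f ≥ 1, and K a field with Gal(K(ζ_l)/K) ≅ (Z/lZ)×. For x ∈ K^{l-1} let α_x := (-1)^{f-1} Σ_{i=1}^{l-1} x_i ζ_l^i ∈ L = K(ζ_l). Then for all x, y ∈ K^{l-1}, α_{x ∗_d y} = σ_{-d}(α_x)·α_y, where σ_{-d} ∈ Gal(L/K) sends ζ_l to ζ_l^{-d} and ∗_d is the operation (x ∗_d y)_k = (-1)^{f-1}(Σ_{i=1}^{l-1} x_{-d^{-1}i} y_{k-i} - Σ_{i=1}^{l-1} x_{-d^{-1}i} y_{-i}). -/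
/-!
Put `S v = ∑ i, v i ζ ^ i`. Since `ζ ^ l = 1`, `S u * S w` is `S` of the cyclic convolution
`k ↦ ∑ i, u i w (k - i)`, and `σ_{-d}` acts on `S x` by the substitution `i ↦ -d⁻¹ i`. So
`σ_{-d}(α_x) α_y` is `S` of the first sum in `x ∗_d y`; the second sum does not depend on `k`
and is killed by `∑ k, ζ ^ k = 0`, while the two signs `(-1) ^ (f - 1)` cancel.
-/

open Finset

theorem IsPrimitiveRoot.sum_pow_val_eq_zero {l : ℕ} [NeZero l] {R : Type*} [CommRing R]
    [IsDomain R] {ζ : R} (hζ : IsPrimitiveRoot ζ l) (hl : 1 < l) :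
    ∑ k : ZMod l, ζ ^ k.val = 0 := by
  obtain ⟨n, rfl⟩ : ∃ n, l = n + 1 := Nat.exists_eq_succ_of_ne_zero (NeZero.ne l)
  exact (Fin.sum_univ_eq_sum_range (ζ ^ ·) (n + 1)).trans (hζ.geom_sum_eq_zero hl)

namespace ZMod

variable {l : ℕ}

theorem pow_val_mul {M : Type*} [Monoid M] {ζ : M} (hζ : ζ ^ l = 1) (a b : ZMod l) :
    ζ ^ (a * b).val = (ζ ^ a.val) ^ b.val := by
  rw [← pow_mul, ZMod.val_mul, ← pow_eq_pow_mod _ hζ]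

variable [NeZero l]

theorem pow_val_add {M : Type*} [Monoid M] {ζ : M} (hζ : ζ ^ l = 1) (a b : ZMod l) :
    ζ ^ (a + b).val = ζ ^ a.val * ζ ^ b.val := by
  rw [← pow_add, ZMod.val_add, ← pow_eq_pow_mod _ hζ]

variable {K L : Type*} [CommRing K] [CommRing L] [Algebra K L] {ζ : L}

theorem sum_mul_sum_pow_val (hζ : ζ ^ l = 1) (u w : ZMod l → K) :
    (∑ i : ZMod l, algebraMap K L (u i) * ζ ^ i.val) *
        ∑ j : ZMod l, algebraMap K L (w j) * ζ ^ j.val =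
      ∑ k : ZMod l, algebraMap K L (∑ i, u i * w (k - i)) * ζ ^ k.val := by
  rw [sum_mul_sum]
  simp only [map_sum, map_mul, sum_mul]
  conv_rhs => rw [sum_comm]
  refine sum_congr rfl fun i _ => ?_
  refine Fintype.sum_equiv (Equiv.addLeft i : ZMod l ≃ ZMod l) _ _ fun j => ?_
  simp only [Equiv.coe_addLeft, add_sub_cancel_left, pow_val_add hζ]
  ring

theorem algHom_sum_pow_val (σ : L →ₐ[K] L) (c : (ZMod l)ˣ) (hσ : σ ζ = ζ ^ (c : ZMod l).val)
    (hζ : ζ ^ l = 1) (v : ZMod l → K) :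
    σ (∑ i : ZMod l, algebraMap K L (v i) * ζ ^ i.val) =
      ∑ i : ZMod l, algebraMap K L (v (↑c⁻¹ * i)) * ζ ^ i.val := by
  simp only [map_sum, map_mul, AlgHom.commutes, map_pow, hσ, ← pow_val_mul hζ]
  refine Fintype.sum_equiv (Units.mulLeft c) _ _ fun i => ?_
  simp only [Units.mulLeft_apply, Units.inv_mul_cancel_left]

end ZMod

theorem alpha_starOp_general (l : ℕ) [NeZero l] (hl : l.Prime)
    (f : ℕ) (d : (ZMod l)ˣ)
    {K L : Type*} [Field K] [Field L] [Algebra K L]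
    (ζ : L) (hζ : IsPrimitiveRoot ζ l)
    (σ : L ≃ₐ[K] L) (hσ : σ ζ = ζ ^ (((-d : (ZMod l)ˣ) : ZMod l)).val)
    (x y : ZMod l → K) :
    letI α : (ZMod l → K) → L := fun v =>
      (-1 : L) ^ (f - 1) * ∑ i : ZMod l, algebraMap K L (v i) * ζ ^ i.val
    α (starOp l f d x y) = σ (α x) * α y := by
  have hζl : ζ ^ l = 1 := hζ.pow_eq_one
  have hσx : σ (∑ i : ZMod l, algebraMap K L (x i) * ζ ^ i.val) =
      ∑ i : ZMod l, algebraMap K L (x (-↑d⁻¹ * i)) * ζ ^ i.val := by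
    simpa only [inv_neg, Units.val_neg, AlgEquiv.coe_toAlgHom] using
      ZMod.algHom_sum_pow_val σ.toAlgHom (-d) hσ hζl x
  have hsign : (-1 : L) ^ (f - 1) * (-1) ^ (f - 1) = 1 := by rw [← mul_pow]; norm_num
  dsimp only
  rw [map_mul, map_pow, map_neg, map_one, hσx, mul_mul_mul_comm, hsign, one_mul,
    ZMod.sum_mul_sum_pow_val hζl]
  simp only [starOp, map_mul, map_pow, map_neg, map_one, map_sub, mul_sum, ← mul_assoc, hsign,
    one_mul, sub_mul, sum_sub_distrib]
  rw [← mul_sum, hζ.sum_pow_val_eq_zero hl.one_lt, mul_zero, sub_zero]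

/-- `α_{x ∗_d y} = σ_{-d}(α_x)·α_y`, where `α_x = (-1)^{f-1} Σ x_i ζ_l^i` and `σ_{-d}` is the
Galois automorphism with `σ_{-d}(ζ_l) = ζ_l^{-d}`. -/
theorem alpha_starOp (l : ℕ) [NeZero l] (hl : l.Prime) (hodd : Odd l)
    (f : ℕ) (hf : 1 ≤ f) (d : (ZMod l)ˣ)
    {K L : Type*} [Field K] [Field L] [Algebra K L]
    (ζ : L) (hζ : IsPrimitiveRoot ζ l)
    (hind : LinearIndependent K fun i : Fin (l - 1) => ζ ^ ((i : ℕ) + 1))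
    (σ : L ≃ₐ[K] L) (hσ : σ ζ = ζ ^ (((-d : (ZMod l)ˣ) : ZMod l)).val)
    (x y : ZMod l → K) (hx0 : x 0 = 0) (hy0 : y 0 = 0) :
    letI α : (ZMod l → K) → L := fun v =>
      (-1 : L) ^ (f - 1) * ∑ i : ZMod l, algebraMap K L (v i) * ζ ^ i.val
    α (starOp l f d x y) = σ (α x) * α y :=
  alpha_starOp_general l hl f d ζ hζ σ hσ x y
end

section
/- Let l be an odd prime, d ∈ (Z/lZ)×, f ≥ 1, K a field with [K(ζ_l):K] = l-1, and x = (x₁,…,x_{l-1}) ∈ K^{l-1}. Let M_d be the (l-1)×(l-1) matrix with entries M_d[k,j] = (-1)^{f-1}(x_{d^{-1}(k-j)} - x_{d^{-1}k}) for 1 ≤ k, j ≤ l-1 (indices mod l, x₀ = 0). Then det M_d = N_{L/K}(α_x), where L = K(ζ_l), α_x = (-1)^{f-1} Σ_{i=1}^{l-1} x_i ζ_l^i, and N_{L/K} is the field norm. -/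
/-!
Since `ζ` generates `L` and is a unit, `(ζ ^ a)_{a ≠ 0}` is `ζ` times the power basis of `ζ`, hence
a basis of `L` over `K`. From `ζ ^ 0 = -∑_{a ≠ 0} ζ ^ a`, multiplication by `∑ x_i ζ ^ i` has
matrix `(x (m - t) - x (-t))_{m, t ≠ 0}` in this basis, and its determinant is the norm. The matrix
`M_d` is the transpose of that matrix reindexed along `k ↦ -d⁻¹ k`, and the sign `(-1) ^ (f - 1)`
is absorbed into `x`.
-/

open Finset

namespace ZMod

lemma val_natCast_add_one_of_lt_sub_one {n k : ℕ} (hk : k < n - 1) :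
    ((k + 1 : ℕ) : ZMod n).val = k + 1 :=
  val_natCast_of_lt (by omega)

def finEquivNeZero (n : ℕ) [NeZero n] : Fin (n - 1) ≃ {a : ZMod n // a ≠ 0} where
  toFun k := ⟨((k + 1 : ℕ) : ZMod n), fun h => by
    simpa [h] using val_natCast_add_one_of_lt_sub_one k.isLt⟩
  invFun a := ⟨a.1.val - 1, by
    have := val_lt a.1
    have := (val_ne_zero a.1).2 a.2
    omega⟩
  left_inv k := by ext; simp only [val_natCast_add_one_of_lt_sub_one k.isLt]; omega
  right_inv a := by
    have : a.1.val ≠ 0 := (val_ne_zero a.1).2 a.2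
    ext; simp [Nat.sub_add_cancel (Nat.one_le_iff_ne_zero.2 this)]

@[simp]
lemma coe_finEquivNeZero_apply (n : ℕ) [NeZero n] (k : Fin (n - 1)) :
    (finEquivNeZero n k : ZMod n) = ((k + 1 : ℕ) : ZMod n) := rfl

end ZMod

namespace Matrix

/-- The matrix of multiplication by `∑ x_i [i]` on `R[ZMod n] ⧸ (∑_i [i])`, in the basis given by the
classes of `[a]`, `a ≠ 0`: the relation `[0] = -∑_{a ≠ 0} [a]` produces the correction `- x (-t)`. -/
def reducedCirculant {R : Type*} [Sub R] {n : ℕ} (x : ZMod n → R) :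
    Matrix {a : ZMod n // a ≠ 0} {a : ZMod n // a ≠ 0} R :=
  of fun m t => x (m - t) - x (-t)

lemma det_of_unit_mul_eq_det_reducedCirculant {R : Type*} [CommRing R] {n : ℕ} [NeZero n]
    (x : ZMod n → R) (u : (ZMod n)ˣ) :
    (of fun k j : Fin (n - 1) =>
      x (u * (((k + 1 : ℕ) : ZMod n) - ((j + 1 : ℕ) : ZMod n))) - x (u * ((k + 1 : ℕ) : ZMod n))).det
      = (reducedCirculant x).det := by
  let e : Fin (n - 1) ≃ {a : ZMod n // a ≠ 0} :=
    (ZMod.finEquivNeZero n).trans ((Units.mulLeft (-u)).subtypeEquiv fun a => by simp)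
  have h : (of fun k j : Fin (n - 1) =>
      x (u * (((k + 1 : ℕ) : ZMod n) - ((j + 1 : ℕ) : ZMod n))) - x (u * ((k + 1 : ℕ) : ZMod n)))
      = (reducedCirculant x).transpose.submatrix e e := by
    ext k j
    simp only [reducedCirculant, e, of_apply, submatrix_apply, transpose_apply, Equiv.trans_apply,
      Equiv.subtypeEquiv_apply, ZMod.coe_finEquivNeZero_apply, Units.mulLeft_apply, Units.val_neg]
    congr 2 <;> ring
  rw [h, det_submatrix_equiv_self, det_transpose]

end Matrix

namespace IsPrimitiveRoot

section CommMonoid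

variable {M : Type*} [CommMonoid M] {n : ℕ} [NeZero n] {ζ : M}

lemma pow_val_add (hζ : IsPrimitiveRoot ζ n) (a b : ZMod n) :
    ζ ^ (a + b).val = ζ ^ a.val * ζ ^ b.val := by
  have h := pow_mod_orderOf ζ (a.val + b.val)
  rw [← hζ.eq_orderOf, ← ZMod.val_add] at h
  rw [h, pow_add]

end CommMonoid

section Domain

variable {R : Type*} [CommRing R] [IsDomain R] {n : ℕ} [NeZero n] {ζ : R}

lemma sum_pow_val_eq_zero_s18 (hζ : IsPrimitiveRoot ζ n) (hn : 1 < n) :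
    ∑ a : ZMod n, ζ ^ a.val = 0 := by
  rw [← hζ.geom_sum_eq_zero hn]
  exact sum_nbij' ZMod.val (fun i => (i : ZMod n)) (by simp [ZMod.val_lt]) (by simp)
    (by simp) (fun i hi => ZMod.val_cast_of_lt (mem_range.1 hi)) (by simp)

lemma sum_ne_zero_pow_val (hζ : IsPrimitiveRoot ζ n) (hn : 1 < n) :
    ∑ a : {a : ZMod n // a ≠ 0}, ζ ^ a.1.val = -1 := by
  have h := hζ.sum_pow_val_eq_zero_s18 hn
  rw [Fintype.sum_eq_add_sum_subtype_ne _ 0, ZMod.val_zero, pow_zero] at h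
  linear_combination h

lemma sum_mul_pow_val_mul_pow_val (hζ : IsPrimitiveRoot ζ n) (hn : 1 < n) (c : ZMod n → R)
    (t : ZMod n) :
    (∑ i, c i * ζ ^ i.val) * ζ ^ t.val
      = ∑ m : {a : ZMod n // a ≠ 0}, (c (m - t) - c (-t)) * ζ ^ m.1.val := by
  have hshift : (∑ i, c i * ζ ^ i.val) * ζ ^ t.val = ∑ m, c (m - t) * ζ ^ m.val := by
    rw [sum_mul]
    exact Fintype.sum_equiv (Equiv.addRight t) _ _ fun i => by simp [hζ.pow_val_add, mul_assoc]
  rw [hshift, Fintype.sum_eq_add_sum_subtype_ne _ 0]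
  simp only [sub_mul, sum_sub_distrib, ← mul_sum, hζ.sum_ne_zero_pow_val hn, zero_sub,
    ZMod.val_zero, pow_zero]
  ring

end Domain

section Field

variable {K L : Type*} [Field K] [Field L] [Algebra K L] {n : ℕ} [NeZero n] {ζ : L}

noncomputable def neZeroPowBasis (hζ : IsPrimitiveRoot ζ n) (hgen : Algebra.adjoin K {ζ} = ⊤)
    (hdim : Module.finrank K L = n - 1) : Module.Basis {a : ZMod n // a ≠ 0} K L :=
  let pb := PowerBasis.ofAdjoinEqTop ((hζ.isIntegral (NeZero.pos n)).tower_top) hgen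
  (pb.basis.reindex ((finCongr (pb.finrank.symm.trans hdim)).trans (ZMod.finEquivNeZero n))).map
    ((hζ.isUnit (NeZero.ne n)).unit.mulLeftLinearEquiv K L)

lemma neZeroPowBasis_apply (hζ : IsPrimitiveRoot ζ n) (hgen : Algebra.adjoin K {ζ} = ⊤)
    (hdim : Module.finrank K L = n - 1) (a : {a : ZMod n // a ≠ 0}) :
    hζ.neZeroPowBasis hgen hdim a = ζ ^ a.1.val := by
  have ha : a.1.val ≠ 0 := (ZMod.val_ne_zero a.1).2 a.2
  simp only [neZeroPowBasis, Module.Basis.map_apply, Module.Basis.reindex_apply,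
    PowerBasis.coe_basis, PowerBasis.ofAdjoinEqTop_gen, Units.mulLeftLinearEquiv_apply,
    IsUnit.unit_spec]
  change ζ * ζ ^ (a.1.val - 1) = _
  rw [← pow_succ', Nat.sub_add_cancel (Nat.one_le_iff_ne_zero.2 ha)]

lemma leftMulMatrix_neZeroPowBasis (hζ : IsPrimitiveRoot ζ n) (hn : 1 < n)
    (hgen : Algebra.adjoin K {ζ} = ⊤) (hdim : Module.finrank K L = n - 1) (x : ZMod n → K) :
    Algebra.leftMulMatrix (hζ.neZeroPowBasis hgen hdim) (∑ i, algebraMap K L (x i) * ζ ^ i.val)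
      = Matrix.reducedCirculant x := by
  ext m t
  have hmul : (∑ i, algebraMap K L (x i) * ζ ^ i.val) * hζ.neZeroPowBasis hgen hdim t
      = ∑ s : {a : ZMod n // a ≠ 0}, (x (s - t) - x (-t)) • hζ.neZeroPowBasis hgen hdim s := by
    simp only [neZeroPowBasis_apply, hζ.sum_mul_pow_val_mul_pow_val hn, Algebra.smul_def, map_sub]
  rw [Algebra.leftMulMatrix_eq_repr_mul, hmul, Module.Basis.repr_sum_self]
  rfl

theorem norm_sum_mul_pow_val_eq_det (hζ : IsPrimitiveRoot ζ n) (hn : 1 < n)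
    (hgen : Algebra.adjoin K {ζ} = ⊤) (hdim : Module.finrank K L = n - 1) (x : ZMod n → K) :
    Algebra.norm K (∑ i, algebraMap K L (x i) * ζ ^ i.val) = (Matrix.reducedCirculant x).det := by
  rw [Algebra.norm_eq_matrix_det (hζ.neZeroPowBasis hgen hdim),
    hζ.leftMulMatrix_neZeroPowBasis hn hgen hdim]

end Field

end IsPrimitiveRoot

theorem det_Md_eq_norm_general (l : ℕ) [NeZero l] (hl : l.Prime)
    (f : ℕ) (d : (ZMod l)ˣ)
    {K L : Type*} [Field K] [Field L] [Algebra K L]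
    (hdim : Module.finrank K L = l - 1)
    (ζ : L) (hζ : IsPrimitiveRoot ζ l)
    (hgen : Algebra.adjoin K ({ζ} : Set L) = ⊤)
    (x : ZMod l → K) :
    letI ι : Fin (l - 1) → ZMod l := fun i => (((i : ℕ) + 1 : ℕ) : ZMod l)
    letI M : Matrix (Fin (l - 1)) (Fin (l - 1)) K := Matrix.of fun k j =>
      (-1 : K) ^ (f - 1) * (x ((↑d⁻¹ : ZMod l) * (ι k - ι j)) - x ((↑d⁻¹ : ZMod l) * ι k))
    M.det = Algebra.norm K
      ((-1 : L) ^ (f - 1) * ∑ i : ZMod l, algebraMap K L (x i) * ζ ^ i.val) := by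
  have hα : (-1 : L) ^ (f - 1) * ∑ i : ZMod l, algebraMap K L (x i) * ζ ^ i.val
      = ∑ i : ZMod l, algebraMap K L ((-1) ^ (f - 1) * x i) * ζ ^ i.val := by
    simp [mul_sum, mul_assoc]
  rw [hα, hζ.norm_sum_mul_pow_val_eq_det hl.one_lt hgen hdim,
    ← Matrix.det_of_unit_mul_eq_det_reducedCirculant _ d⁻¹]
  simp only [mul_sub]

/-- Lemma 6.2: the representation matrix `M_d` of left `∗_d`-multiplication by `x`, with entries
`M_d[k,j] = (-1)^{f-1}(x_{d⁻¹(k-j)} - x_{d⁻¹k})`, has determinant `N_{L/K}(α_x)` where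
`α_x = (-1)^{f-1} Σ x_i ζ_l^i` and `L = K(ζ_l)` has degree `l-1` over `K`. -/
theorem det_Md_eq_norm (l : ℕ) [NeZero l] (hl : l.Prime) (hodd : Odd l)
    (f : ℕ) (hf : 1 ≤ f) (d : (ZMod l)ˣ)
    {K L : Type*} [Field K] [Field L] [Algebra K L] [FiniteDimensional K L]
    (hdim : Module.finrank K L = l - 1)
    (ζ : L) (hζ : IsPrimitiveRoot ζ l)
    (hgen : Algebra.adjoin K ({ζ} : Set L) = ⊤)
    (x : ZMod l → K) (hx0 : x 0 = 0) :
    letI ι : Fin (l - 1) → ZMod l := fun i => (((i : ℕ) + 1 : ℕ) : ZMod l)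
    letI M : Matrix (Fin (l - 1)) (Fin (l - 1)) K := Matrix.of fun k j =>
      (-1 : K) ^ (f - 1) * (x ((↑d⁻¹ : ZMod l) * (ι k - ι j)) - x ((↑d⁻¹ : ZMod l) * ι k))
    M.det = Algebra.norm K
      ((-1 : L) ^ (f - 1) * ∑ i : ZMod l, algebraMap K L (x i) * ζ ^ i.val) :=
  det_Md_eq_norm_general l hl f d hdim ζ hζ hgen x
end
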